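/- arXiv:1606.02919 — 6 statements merged into one kernel-verified Lean document; each statement's English description precedes it below -/
import Mathlib

section
/- Let λ ∈ (0,1], let C ⊆ ℝⁿ be a C-set, and let X ⊆ ℝⁿ and U ⊆ ℝᵐ be C-sets. Then Q_k^λ(C) is a C-set for every k ∈ ℕ. -/
open Set Metric Pointwise

noncomputable section

abbrev Euc (n : ℕ) := EuclideanSpace ℝ (Fin n)

def IsCSet {n : ℕ} (C : Set (Euc n)) : Prop :=
  Convex ℝ C ∧ IsCompact C ∧ (0 : Euc n) ∈ interior C

def rho {n : ℕ} (ξ : Euc n) (C : Set (Euc n)) : ℝ :=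
  sSup {μ : ℝ | 0 < μ ∧ μ • ξ ∈ C}

def cdist {n : ℕ} (C D : Set (Euc n)) : ℝ :=
  ⨆ ξ : sphere (0 : Euc n) 1, |Real.log (rho ξ C) - Real.log (rho ξ D)|

def Q1 {n m : ℕ} (A : Matrix (Fin n) (Fin n) ℝ) (B : Matrix (Fin n) (Fin m) ℝ)
    (X : Set (Euc n)) (U : Set (Euc m)) (lam : ℝ) (D : Set (Euc n)) : Set (Euc n) :=
  {x ∈ X | ∃ u ∈ U, WithLp.toLp 2 (A.mulVec x + B.mulVec u) ∈ lam • D}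

def Qiter {n m : ℕ} (A : Matrix (Fin n) (Fin n) ℝ) (B : Matrix (Fin n) (Fin m) ℝ)
    (X : Set (Euc n)) (U : Set (Euc m)) (lam : ℝ) (D : Set (Euc n)) : ℕ → Set (Euc n)
  | 0 => D
  | k + 1 => Q1 A B X U lam (Qiter A B X U lam D k)

def IsContractive {n m : ℕ} (A : Matrix (Fin n) (Fin n) ℝ) (B : Matrix (Fin n) (Fin m) ℝ)
    (X : Set (Euc n)) (U : Set (Euc m)) (lam : ℝ) (C : Set (Euc n)) : Prop :=
  C ⊆ X ∧ ∀ x ∈ C, ∃ u ∈ U, WithLp.toLp 2 (A.mulVec x + B.mulVec u) ∈ lam • C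

def Cmax {n m : ℕ} (A : Matrix (Fin n) (Fin n) ℝ) (B : Matrix (Fin n) (Fin m) ℝ)
    (X : Set (Euc n)) (U : Set (Euc m)) (lam : ℝ) : Set (Euc n) :=
  ⋃₀ {C | IsContractive A B X U lam C}

def ctrb {n m : ℕ} (A : Matrix (Fin n) (Fin n) ℝ) (B : Matrix (Fin n) (Fin m) ℝ) :
    Matrix (Fin n) (Fin n × Fin m) ℝ :=
  Matrix.of fun i p => (A ^ (n - 1 - (p.1 : ℕ)) * B) i p.2

def Controllable {n m : ℕ} (A : Matrix (Fin n) (Fin n) ℝ)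
    (B : Matrix (Fin n) (Fin m) ℝ) : Prop :=
  (ctrb A B).rank = n

def enorm {ι : Type*} [Fintype ι] (v : ι → ℝ) : ℝ :=
  ‖(WithLp.equiv 2 (ι → ℝ)).symm v‖

def sigmaMax {n : ℕ} {ι : Type*} [Fintype ι] (Φ : Matrix (Fin n) ι ℝ) : ℝ :=
  ⨆ ξ : sphere (0 : EuclideanSpace ℝ ι) 1, enorm (Φ.mulVec ξ)

def sigmaMin {n : ℕ} {ι : Type*} [Fintype ι] (Φ : Matrix (Fin n) ι ℝ) : ℝ :=
  ⨅ ξ : sphere (0 : Euc n) 1, enorm (Φ.transpose.mulVec ξ)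

def alphaA {n : ℕ} (A : Matrix (Fin n) (Fin n) ℝ) : ℝ :=
  max 1 (⨆ j ∈ Finset.Icc 1 n, sigmaMax (A ^ j))

def rhoHat {n m : ℕ} (A : Matrix (Fin n) (Fin n) ℝ) (B : Matrix (Fin n) (Fin m) ℝ)
    (lam rx ru : ℝ) : ℝ :=
  lam ^ (n - 1) / alphaA A *
    min (rx / (1 + sigmaMax (ctrb A B) / sigmaMin (ctrb A B)))
        (ru * sigmaMin (ctrb A B))

end

section PreimageOfDifference

variable {E F G : Type*}
  [AddCommGroup E] [Module ℝ E] [TopologicalSpace E]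
  [AddCommGroup F] [Module ℝ F] [TopologicalSpace F]
  [AddCommGroup G] [Module ℝ G] [TopologicalSpace G]
  {X : Set E} {D : Set F} {U : Set G} (f : E →L[ℝ] F) (g : G →L[ℝ] F) (c : ℝ)

theorem Convex.inter_preimage_smul_sub_image (hX : Convex ℝ X) (hD : Convex ℝ D)
    (hU : Convex ℝ U) : Convex ℝ (X ∩ f ⁻¹' (c • D - g '' U)) :=
  hX.inter (((hD.smul c).sub (hU.linear_image g.toLinearMap)).linear_preimage f.toLinearMap)

theorem IsCompact.inter_preimage_smul_sub_image [IsTopologicalAddGroup F]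
    [ContinuousConstSMul ℝ F] [T2Space F] (hX : IsCompact X) (hD : IsCompact D) (hU : IsCompact U) :
    IsCompact (X ∩ f ⁻¹' (c • D - g '' U)) := by
  have hT : IsCompact (c • D - g '' U) := by
    rw [sub_eq_add_neg]
    exact (hD.smul c).add (hU.image g.continuous).neg
  exact hX.inter_right (hT.isClosed.preimage f.continuous)

theorem zero_mem_interior_inter_preimage_smul_sub_image [ContinuousConstSMul ℝ F] {c : ℝ}
    (hc : c ≠ 0) (hX : (0 : E) ∈ interior X) (hD : (0 : F) ∈ interior D) (hU : (0 : G) ∈ U) :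
    (0 : E) ∈ interior (X ∩ f ⁻¹' (c • D - g '' U)) := by
  have hcD : (0 : F) ∈ interior (c • D) := by
    rw [interior_smul₀ hc]
    simpa using Set.smul_mem_smul_set (a := c) hD
  have hcD_sub : c • D ⊆ c • D - g '' U := Set.subset_sub_left ⟨0, hU, map_zero g⟩
  rw [interior_inter]
  refine ⟨hX, preimage_interior_subset_interior_preimage f.continuous ?_⟩
  simpa using interior_mono hcD_sub hcD

end PreimageOfDifference

theorem Q1_eq_inter_preimage {n m : ℕ} (A : Matrix (Fin n) (Fin n) ℝ)
    (B : Matrix (Fin n) (Fin m) ℝ) (X : Set (Euc n)) (U : Set (Euc m)) (lam : ℝ)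
    (D : Set (Euc n)) :
    Q1 A B X U lam D =
      X ∩ A.toEuclideanLin.toContinuousLinearMap ⁻¹'
        (lam • D - B.toEuclideanLin.toContinuousLinearMap '' U) := by
  ext x
  simp only [Q1, Set.mem_sep_iff, Set.mem_inter_iff, Set.mem_preimage, Set.mem_sub,
    Set.mem_image, LinearMap.coe_toContinuousLinearMap', Matrix.toLpLin_apply, WithLp.toLp_add]
  constructor
  · rintro ⟨hx, u, hu, h⟩
    exact ⟨hx, _, h, _, ⟨u, hu, rfl⟩, add_sub_cancel_right _ _⟩
  · rintro ⟨hx, d, hd, _, ⟨u, hu, rfl⟩, h⟩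
    exact ⟨hx, u, hu, by rwa [← h, sub_add_cancel]⟩

theorem IsCSet.Q1 {n m : ℕ} {A : Matrix (Fin n) (Fin n) ℝ} {B : Matrix (Fin n) (Fin m) ℝ}
    {X : Set (Euc n)} {U : Set (Euc m)} {lam : ℝ} {D : Set (Euc n)} (hlam : lam ≠ 0)
    (hX : IsCSet X) (hU : IsCSet U) (hD : IsCSet D) : IsCSet (Q1 A B X U lam D) := by
  rw [Q1_eq_inter_preimage]
  exact ⟨hX.1.inter_preimage_smul_sub_image _ _ _ hD.1 hU.1,
    hX.2.1.inter_preimage_smul_sub_image _ _ _ hD.2.1 hU.2.1,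
    zero_mem_interior_inter_preimage_smul_sub_image _ _ hlam hX.2.2 hD.2.2
      (interior_subset hU.2.2)⟩

theorem stmt3 {n m : ℕ} (lam : ℝ) (hlam : lam ∈ Set.Ioc (0 : ℝ) 1)
    (A : Matrix (Fin n) (Fin n) ℝ) (B : Matrix (Fin n) (Fin m) ℝ)
    (X : Set (Euc n)) (U : Set (Euc m)) (C : Set (Euc n))
    (hX : IsCSet X) (hU : IsCSet U) (hC : IsCSet C) :
    ∀ k : ℕ, IsCSet (Qiter A B X U lam C k) := by
  intro k
  induction k with
  | zero => exact hC
  | succ k ih => exact IsCSet.Q1 hlam.1.ne' hX hU ih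
end

section
/- Let λ ∈ (0,1], k ∈ ℕ, let C ⊆ ℝⁿ be a C-set, and let X ⊆ ℝⁿ and U ⊆ ℝᵐ be C-sets. Then x ∈ Q_{k+1}^λ(C) if and only if there exist u₀, …, u_k ∈ U and γ ∈ C such that A^j x + Σ_{i=0}^{j−1} A^{j−1−i} B λ^i u_i ∈ λ^j·X for every j ∈ {0, 1, …, k}, and A^{k+1} x + Σ_{i=0}^{k} A^{k−i} B λ^i u_i = λ^{k+1} γ. -/
open Set Metric Pointwise

/-!
Unroll `Q_{k+1}^λ(D) = Q₁^λ(Q_k^λ(D))` one step at a time. If `λ y = A x + B u₀`, the trajectory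
from `x` driven by the inputs `λ^i u_i` is `λ` times the trajectory from `y` driven by the shifted
inputs `λ^i u_{i+1}`; since `λ ≠ 0`, reaching `λ^{j+1} X` from `x` is equivalent to reaching
`λ^j X` from `y`, and induction on `k` does the rest.
-/

open Matrix

section ScaledTrajectory

variable {R ι κ : Type*} [CommRing R] [Fintype ι] [DecidableEq ι] [Fintype κ]

/-- The state reached after `j` steps of `x⁺ = A x + B v` from `x` under the inputs
`v i = lam ^ i • u i`. -/
def scaledTrajectory (A : Matrix ι ι R) (B : Matrix ι κ R) (lam : R) (u : ℕ → κ → R)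
    (x : ι → R) (j : ℕ) : ι → R :=
  A ^ j *ᵥ x + ∑ i ∈ Finset.range j, lam ^ i • ((A ^ (j - 1 - i) * B) *ᵥ u i)

@[simp]
lemma scaledTrajectory_zero (A : Matrix ι ι R) (B : Matrix ι κ R) (lam : R)
    (u : ℕ → κ → R) (x : ι → R) : scaledTrajectory A B lam u x 0 = x := by
  simp [scaledTrajectory]

lemma scaledTrajectory_succ {A : Matrix ι ι R} {B : Matrix ι κ R} {lam : R}
    {u : ℕ → κ → R} {x y : ι → R} (hy : lam • y = A *ᵥ x + B *ᵥ u 0) (j : ℕ) :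
    scaledTrajectory A B lam u x (j + 1) =
      lam • scaledTrajectory A B lam (fun i => u (i + 1)) y j := by
  have h_head : A ^ (j + 1) *ᵥ x + (A ^ j * B) *ᵥ u 0 = lam • (A ^ j *ᵥ y) := by
    rw [pow_succ, ← mulVec_mulVec, ← mulVec_mulVec, ← mulVec_add, ← hy, mulVec_smul]
  have h_tail : ∀ i ∈ Finset.range j,
      lam ^ (i + 1) • ((A ^ (j + 1 - 1 - (i + 1)) * B) *ᵥ u (i + 1)) =
        lam • (lam ^ i • ((A ^ (j - 1 - i) * B) *ᵥ u (i + 1))) := by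
    intro i _
    rw [smul_smul, ← pow_succ', Nat.add_sub_cancel, Nat.sub_sub, add_comm 1 i]
  rw [scaledTrajectory, scaledTrajectory, Finset.sum_range_succ', Finset.sum_congr rfl h_tail,
    ← Finset.smul_sum, smul_add, ← h_head]
  simp only [pow_zero, one_smul, Nat.add_sub_cancel, Nat.sub_zero]
  abel

end ScaledTrajectory

section Qiter

variable {n m : ℕ} (A : Matrix (Fin n) (Fin n) ℝ) (B : Matrix (Fin n) (Fin m) ℝ)
  (X : Set (Euc n)) (U : Set (Euc m)) (lam : ℝ) (D : Set (Euc n))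

def ScaledFeasible (k : ℕ) (x : Euc n) (u : ℕ → Euc m) : Prop :=
  (∀ i < k, u i ∈ U) ∧
    (∀ j < k, WithLp.toLp 2 (scaledTrajectory A B lam (fun i => (u i).ofLp) x.ofLp j)
      ∈ lam ^ j • X) ∧
    WithLp.toLp 2 (scaledTrajectory A B lam (fun i => (u i).ofLp) x.ofLp k) ∈ lam ^ k • D

variable {A B X U lam D}

lemma scaledFeasible_succ_iff (hlam : lam ≠ 0) {k : ℕ} {x y : Euc n} {u : ℕ → Euc m}
    (hy : lam • y = WithLp.toLp 2 (A *ᵥ x.ofLp + B *ᵥ (u 0).ofLp)) :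
    ScaledFeasible A B X U lam D (k + 1) x u ↔
      x ∈ X ∧ u 0 ∈ U ∧ ScaledFeasible A B X U lam D k y (fun i => u (i + 1)) := by
  have hy' : lam • y.ofLp = A *ᵥ x.ofLp + B *ᵥ (u 0).ofLp := congrArg WithLp.ofLp hy
  have h_mem (j : ℕ) (S : Set (Euc n)) :
      WithLp.toLp 2 (scaledTrajectory A B lam (fun i => (u i).ofLp) x.ofLp (j + 1))
          ∈ lam ^ (j + 1) • S ↔
        WithLp.toLp 2 (scaledTrajectory A B lam (fun i => (u (i + 1)).ofLp) y.ofLp j)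
          ∈ lam ^ j • S := by
    rw [scaledTrajectory_succ hy', WithLp.toLp_smul, pow_succ', mul_smul,
      smul_mem_smul_set_iff₀ hlam]
  simp only [ScaledFeasible, Nat.forall_lt_succ_left, h_mem, pow_zero, one_smul,
    scaledTrajectory_zero, WithLp.toLp_ofLp]
  tauto

theorem mem_Qiter_iff (hlam : lam ≠ 0) (k : ℕ) (x : Euc n) :
    x ∈ Qiter A B X U lam D k ↔ ∃ u, ScaledFeasible A B X U lam D k x u := by
  induction k generalizing x with
  | zero => simp [ScaledFeasible, Qiter]
  | succ k ih =>
    constructor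
    · rintro ⟨hx, u₀, hu₀, y, hyQ, hy⟩
      obtain ⟨v, hv⟩ := (ih y).mp hyQ
      exact ⟨fun i => Nat.casesOn i u₀ v, (scaledFeasible_succ_iff hlam hy).mpr ⟨hx, hu₀, hv⟩⟩
    · rintro ⟨u, hu⟩
      set y : Euc n := lam⁻¹ • WithLp.toLp 2 (A *ᵥ x.ofLp + B *ᵥ (u 0).ofLp)
      have hy : lam • y = WithLp.toLp 2 (A *ᵥ x.ofLp + B *ᵥ (u 0).ofLp) :=
        smul_inv_smul₀ hlam _
      obtain ⟨hx, hu₀, hv⟩ := (scaledFeasible_succ_iff hlam hy).mp hu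
      exact ⟨hx, u 0, hu₀, y, (ih y).mpr ⟨_, hv⟩, hy⟩

end Qiter

theorem stmt5_general {n m : ℕ} (lam : ℝ) (hlam : lam ∈ Set.Ioc (0 : ℝ) 1) (k : ℕ)
    (A : Matrix (Fin n) (Fin n) ℝ) (B : Matrix (Fin n) (Fin m) ℝ)
    (X : Set (Euc n)) (U : Set (Euc m)) (C : Set (Euc n))
    (x : Euc n) :
    x ∈ Qiter A B X U lam C (k + 1) ↔
      ∃ u : ℕ → Euc m, (∀ i ≤ k, u i ∈ U) ∧ ∃ γ ∈ C,
        (∀ j ≤ k, WithLp.toLp 2 ((A ^ j).mulVec x +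
            ∑ i ∈ Finset.range j, lam ^ i • (A ^ (j - 1 - i) * B).mulVec (u i))
              ∈ lam ^ j • X) ∧
        (A ^ (k + 1)).mulVec x +
            ∑ i ∈ Finset.range (k + 1), lam ^ i • (A ^ (k - i) * B).mulVec (u i)
          = lam ^ (k + 1) • γ := by
  have h_final (u : ℕ → Euc m) :
      WithLp.toLp 2 (scaledTrajectory A B lam (fun i => (u i).ofLp) x.ofLp (k + 1))
          ∈ lam ^ (k + 1) • C ↔
        ∃ γ ∈ C, (A ^ (k + 1)).mulVec x +
          ∑ i ∈ Finset.range (k + 1), lam ^ i • (A ^ (k - i) * B).mulVec (u i)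
            = lam ^ (k + 1) • γ := by
    simp only [mem_smul_set, scaledTrajectory, Nat.add_sub_cancel]
    refine exists_congr fun γ => and_congr_right fun _ => ?_
    rw [eq_comm, ← WithLp.toLp_smul, (WithLp.toLp_injective 2).eq_iff]
  simp only [mem_Qiter_iff hlam.1.ne', ScaledFeasible, Nat.lt_succ_iff, h_final]
  refine exists_congr fun u => and_congr_right fun _ => ?_
  simp only [scaledTrajectory, exists_and_left.symm, and_left_comm]

theorem stmt5 {n m : ℕ} (lam : ℝ) (hlam : lam ∈ Set.Ioc (0 : ℝ) 1) (k : ℕ)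
    (A : Matrix (Fin n) (Fin n) ℝ) (B : Matrix (Fin n) (Fin m) ℝ)
    (X : Set (Euc n)) (U : Set (Euc m)) (C : Set (Euc n))
    (hC : IsCSet C) (hX : IsCSet X) (hU : IsCSet U) (x : Euc n) :
    x ∈ Qiter A B X U lam C (k + 1) ↔
      ∃ u : ℕ → Euc m, (∀ i ≤ k, u i ∈ U) ∧ ∃ γ ∈ C,
        (∀ j ≤ k, WithLp.toLp 2 ((A ^ j).mulVec x +
            ∑ i ∈ Finset.range j, lam ^ i • (A ^ (j - 1 - i) * B).mulVec (u i))
              ∈ lam ^ j • X) ∧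
        (A ^ (k + 1)).mulVec x +
            ∑ i ∈ Finset.range (k + 1), lam ^ i • (A ^ (k - i) * B).mulVec (u i)
          = lam ^ (k + 1) • γ :=
  stmt5_general lam hlam k A B X U C x
end

section
/- Let λ ∈ (0,1], let (A,B) be controllable, and let X ⊆ ℝⁿ and U ⊆ ℝᵐ be C-sets. Then there exists η ∈ [0,1) (depending only on A, B, X, U, and λ) such that d(Q_n^λ(C), Q_n^λ(D)) ≤ η·d(C,D) for all C-sets C, D ⊆ ℝⁿ with C ⊆ D, where n is the state-space dimension. -/
open Set Metric Pointwise

/-! Controllability gives a dead-beat feedback, continuous in the initial state, that steers every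
state of a small ball `closedBall 0 r` to the origin in `n` steps within the constraints; hence
`closedBall 0 r ⊆ Q_n(C)` for every `C ∋ 0`, while `Q_n(C) ⊆ X ⊆ closedBall 0 R`.
If `C ⊆ D` and `α = exp d(C, D)`, then `D ⊆ α • C`, and since `Q_n` respects convex combinations,
`α⁻¹ • Q_n(α • C) + (1 - α⁻¹) • Q_n({0}) ⊆ Q_n(C)`. In every direction this bounds the ratio of
the radial functions of `Q_n(D)` and `Q_n(C)` by `(1 - r/R) α + r/R` and by `R / r`; the logarithm
of the smaller bound is at most `η · d(C, D)` for a fixed `η < 1`. -/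

open Filter Topology Real
open scoped Matrix

section Radial

variable {n : ℕ} {K L : Set (Euc n)} {ξ : Euc n}

lemma rho_nonneg (ξ : Euc n) (K : Set (Euc n)) : 0 ≤ rho ξ K :=
  Real.sSup_nonneg fun _ hμ => hμ.1.le

lemma le_of_smul_mem_closedBall {R μ : ℝ} (hξ : ‖ξ‖ = 1) (hμ : 0 < μ)
    (h : μ • ξ ∈ closedBall (0 : Euc n) R) : μ ≤ R := by
  simpa [norm_smul, hξ, abs_of_pos hμ] using h

lemma rho_le {R : ℝ} (hK : K ⊆ closedBall 0 R) (hR : 0 ≤ R) (hξ : ‖ξ‖ = 1) : rho ξ K ≤ R :=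
  Real.sSup_le (fun _ hμ => le_of_smul_mem_closedBall hξ hμ.1 (hK hμ.2)) hR

lemma le_rho {R μ : ℝ} (hK : K ⊆ closedBall 0 R) (hξ : ‖ξ‖ = 1) (hμ : 0 < μ) (h : μ • ξ ∈ K) :
    μ ≤ rho ξ K :=
  le_csSup ⟨R, fun _ hν => le_of_smul_mem_closedBall hξ hν.1 (hK hν.2)⟩ ⟨hμ, h⟩

lemma rho_mono {R : ℝ} (hL : L ⊆ closedBall 0 R) (hKL : K ⊆ L) (hξ : ‖ξ‖ = 1) :
    rho ξ K ≤ rho ξ L :=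
  Real.sSup_le (fun _ hμ => le_rho hL hξ hμ.1 (hKL hμ.2)) (rho_nonneg ξ L)

lemma le_rho_of_closedBall_subset {r R : ℝ} (hr : 0 < r) (hrK : closedBall 0 r ⊆ K)
    (hK : K ⊆ closedBall 0 R) (hξ : ‖ξ‖ = 1) : r ≤ rho ξ K :=
  le_rho hK hξ hr (hrK (by simp [norm_smul, hξ, abs_of_pos hr]))

lemma smul_mem_of_le_rho (hconv : Convex ℝ K) (hcl : IsClosed K) (h0 : (0 : Euc n) ∈ K) {ν : ℝ}
    (hν : 0 < ν) (hle : ν ≤ rho ξ K) : ν • ξ ∈ K := by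
  have hne : {μ : ℝ | 0 < μ ∧ μ • ξ ∈ K}.Nonempty := by
    by_contra h
    rw [not_nonempty_iff_eq_empty] at h
    simp only [rho, h, Real.sSup_empty] at hle
    linarith
  have hIoo : Ioo 0 ν ⊆ (· • ξ) ⁻¹' K := fun μ hμ => by
    obtain ⟨μ', ⟨hμ'0, hμ'K⟩, hμμ'⟩ := exists_lt_of_lt_csSup hne (hμ.2.trans_le hle)
    have := hconv.smul_mem_of_zero_mem h0 hμ'K
      ⟨(div_pos hμ.1 hμ'0).le, (div_le_one hμ'0).2 hμμ'.le⟩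
    rwa [smul_smul, div_mul_cancel₀ _ hμ'0.ne'] at this
  have hcl' := closure_minimal hIoo (hcl.preimage (continuous_id.smul continuous_const))
  rw [closure_Ioo hν.ne] at hcl'
  exact hcl' ⟨hν.le, le_rfl⟩

lemma subset_smul_of_rho_le (hconv : Convex ℝ K) (hcl : IsClosed K) (h0 : (0 : Euc n) ∈ K)
    {R α : ℝ} (hL : L ⊆ closedBall 0 R) (hα : 0 < α)
    (h : ∀ ξ : Euc n, ‖ξ‖ = 1 → rho ξ L ≤ α * rho ξ K) : L ⊆ α • K := by
  intro x hx
  rcases eq_or_ne x 0 with rfl | hx0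
  · exact ⟨0, h0, smul_zero α⟩
  have hξ : ‖‖x‖⁻¹ • x‖ = 1 := norm_smul_inv_norm (𝕜 := ℝ) hx0
  have hxξ : ‖x‖ • ‖x‖⁻¹ • x = x := smul_inv_smul₀ (norm_ne_zero_iff.2 hx0) x
  have hle : ‖x‖ ≤ α * rho (‖x‖⁻¹ • x) K :=
    (le_rho hL hξ (norm_pos_iff.2 hx0) (hxξ.symm ▸ hx)).trans (h _ hξ)
  refine ⟨(‖x‖ / α) • ‖x‖⁻¹ • x, smul_mem_of_le_rho hconv hcl h0 (by positivity)
    ((div_le_iff₀' hα).2 hle), ?_⟩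
  change α • (‖x‖ / α) • ‖x‖⁻¹ • x = x
  rw [smul_smul, mul_div_cancel₀ _ hα.ne', hxξ]

lemma IsCSet.exists_rho_mem_Icc (hK : IsCSet K) :
    ∃ r R, 0 < r ∧ ∀ ξ : Euc n, ‖ξ‖ = 1 → rho ξ K ∈ Icc r R := by
  obtain ⟨R, hR⟩ := hK.2.1.isBounded.subset_closedBall 0
  obtain ⟨r, hr, hrK⟩ := nhds_basis_closedBall.mem_iff.1 (mem_interior_iff_mem_nhds.1 hK.2.2)
  exact ⟨r, R, hr, fun ξ hξ => ⟨le_rho_of_closedBall_subset hr hrK hR hξ,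
    rho_le hR (by simpa using hR (interior_subset hK.2.2)) hξ⟩⟩

lemma IsCSet.rho_pos (hK : IsCSet K) (hξ : ‖ξ‖ = 1) : 0 < rho ξ K := by
  obtain ⟨r, R, hr, h⟩ := hK.exists_rho_mem_Icc
  exact hr.trans_le (h ξ hξ).1

end Radial

section Cdist

variable {n : ℕ} {C D : Set (Euc n)}

lemma cdist_nonneg (C D : Set (Euc n)) : 0 ≤ cdist C D :=
  Real.iSup_nonneg fun _ => abs_nonneg _

lemma cdist_eq_zero_of_dim_zero (C D : Set (Euc 0)) : cdist C D = 0 := by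
  have : IsEmpty (sphere (0 : Euc 0) 1) := by
    rw [sphere_eq_empty_of_subsingleton one_ne_zero]; infer_instance
  exact Real.iSup_of_isEmpty _

lemma abs_log_rho_sub_le_cdist (hC : IsCSet C) (hD : IsCSet D) {ξ : Euc n} (hξ : ‖ξ‖ = 1) :
    |log (rho ξ C) - log (rho ξ D)| ≤ cdist C D := by
  obtain ⟨rC, RC, hrC, hC'⟩ := hC.exists_rho_mem_Icc
  obtain ⟨rD, RD, hrD, hD'⟩ := hD.exists_rho_mem_Icc
  have habs : ∀ {r R ρ : ℝ}, 0 < r → ρ ∈ Icc r R → |log ρ| ≤ max |log r| |log R| :=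
    fun hr hρ => abs_le_max_abs_abs (log_le_log hr hρ.1) (log_le_log (hr.trans_le hρ.1) hρ.2)
  refine le_ciSup (f := fun ξ : sphere (0 : Euc n) 1 => |log (rho ξ C) - log (rho ξ D)|)
    ⟨max |log rC| |log RC| + max |log rD| |log RD|, ?_⟩ ⟨ξ, mem_sphere_zero_iff_norm.2 hξ⟩
  rintro _ ⟨⟨η, hη⟩, rfl⟩
  have hη' := mem_sphere_zero_iff_norm.1 hη
  exact (abs_sub _ _).trans (add_le_add (habs hrC (hC' η hη')) (habs hrD (hD' η hη')))

lemma subset_exp_cdist_smul (hC : IsCSet C) (hD : IsCSet D) : D ⊆ exp (cdist C D) • C := by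
  obtain ⟨R, hR⟩ := hD.2.1.isBounded.subset_closedBall 0
  refine subset_smul_of_rho_le hC.1 hC.2.1.isClosed (interior_subset hC.2.2) hR (exp_pos _)
    fun ξ hξ => ?_
  have hlog : log (rho ξ D) ≤ cdist C D + log (rho ξ C) := by
    linarith [neg_abs_le (log (rho ξ C) - log (rho ξ D)), abs_log_rho_sub_le_cdist hC hD hξ]
  rwa [log_le_iff_le_exp (hD.rho_pos hξ), exp_add, exp_log (hC.rho_pos hξ)] at hlog

end Cdist

section Qiter

variable {n m : ℕ} {A : Matrix (Fin n) (Fin n) ℝ} {B : Matrix (Fin n) (Fin m) ℝ}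
  {X : Set (Euc n)} {U : Set (Euc m)} {lam : ℝ}

lemma Qiter_mono {C D : Set (Euc n)} (h : C ⊆ D) (k : ℕ) :
    Qiter A B X U lam C k ⊆ Qiter A B X U lam D k := by
  induction k with
  | zero => exact h
  | succ k ih => exact fun x ⟨hxX, u, hu, hxu⟩ => ⟨hxX, u, hu, smul_set_mono ih hxu⟩

lemma Qiter_subset {C : Set (Euc n)} {k : ℕ} (hk : k ≠ 0) : Qiter A B X U lam C k ⊆ X := by
  obtain ⟨k, rfl⟩ := Nat.exists_eq_succ_of_ne_zero hk
  exact fun x hx => hx.1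

lemma smul_add_smul_Qiter_subset (hX : Convex ℝ X) (hU : Convex ℝ U) {a b : ℝ} (ha : 0 ≤ a)
    (hb : 0 ≤ b) (hab : a + b = 1) (C₁ C₂ : Set (Euc n)) (k : ℕ) :
    a • Qiter A B X U lam C₁ k + b • Qiter A B X U lam C₂ k
      ⊆ Qiter A B X U lam (a • C₁ + b • C₂) k := by
  induction k with
  | zero => exact subset_rfl
  | succ k ih =>
    rintro _ ⟨_, ⟨x, ⟨hxX, u, hu, p, hp, hpx⟩, rfl⟩, _, ⟨y, ⟨hyX, v, hv, q, hq, hqy⟩, rfl⟩, rfl⟩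
    refine ⟨hX hxX hyX ha hb hab, a • u + b • v, hU hu hv ha hb hab, a • p + b • q,
      ih (add_mem_add (smul_mem_smul_set hp) (smul_mem_smul_set hq)), ?_⟩
    ext i
    have hpi := congrArg (· i) hpx
    have hqi := congrArg (· i) hqy
    simp only [PiLp.smul_apply, PiLp.add_apply, WithLp.ofLp_add, WithLp.ofLp_smul,
      Matrix.mulVec_add, Matrix.mulVec_smul, Pi.add_apply, Pi.smul_apply, smul_eq_mul] at hpi hqi ⊢
    linear_combination a * hpi + b * hqi

lemma mem_pow_smul_of_mem_pow_succ_smul {E : Type*} [AddCommGroup E] [Module ℝ E]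
    (hlam : lam ≠ 0) {S : Set E} {x : E} {j : ℕ} (h : x ∈ lam ^ (j + 1) • S) :
    lam⁻¹ • x ∈ lam ^ j • S := by
  rwa [pow_succ', mul_smul, mem_smul_set_iff_inv_smul_mem₀ hlam] at h

lemma mem_Qiter_of_dynamics (hlam : lam ≠ 0) {C : Set (Euc n)} {k : ℕ}
    (s : ℕ → Fin n → ℝ) (u : ℕ → Fin m → ℝ) (hdyn : ∀ j, s (j + 1) = A *ᵥ s j + B *ᵥ u j)
    (hsX : ∀ j < k, WithLp.toLp 2 (s j) ∈ lam ^ j • X)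
    (huU : ∀ j < k, WithLp.toLp 2 (u j) ∈ lam ^ j • U)
    (hC : WithLp.toLp 2 (s k) ∈ lam ^ k • C) : WithLp.toLp 2 (s 0) ∈ Qiter A B X U lam C k := by
  induction k generalizing s u with
  | zero => simpa [Qiter] using hC
  | succ k ih =>
    have hs1 : WithLp.toLp 2 (lam⁻¹ • s 1) ∈ Qiter A B X U lam C k := by
      refine ih (fun j => lam⁻¹ • s (j + 1)) (fun j => lam⁻¹ • u (j + 1))
        (fun j => by simp only [hdyn (j + 1), Matrix.mulVec_smul, smul_add])
        (fun j hj => ?_) (fun j hj => ?_) ?_ <;>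
      rw [WithLp.toLp_smul] <;> apply mem_pow_smul_of_mem_pow_succ_smul hlam
      exacts [hsX _ (by omega), huU _ (by omega), hC]
    refine ⟨by simpa using hsX 0 k.succ_pos, WithLp.toLp 2 (u 0), by simpa using huU 0 k.succ_pos,
      ?_⟩
    rw [WithLp.toLp_smul] at hs1
    rw [← hdyn 0]
    simpa [smul_inv_smul₀ hlam] using smul_mem_smul_set (a := lam) hs1

end Qiter

section Trajectory

variable {ι κ : Type*} [Fintype ι] [DecidableEq ι] [Fintype κ]

def trajectory (A : Matrix ι ι ℝ) (B : Matrix ι κ ℝ) (x : ι → ℝ) (u : ℕ → κ → ℝ) (j : ℕ) :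
    ι → ℝ :=
  A ^ j *ᵥ x + ∑ k ∈ Finset.range j, (A ^ (j - 1 - k) * B) *ᵥ u k

variable (A : Matrix ι ι ℝ) (B : Matrix ι κ ℝ) (x : ι → ℝ) (u : ℕ → κ → ℝ)

@[simp]
lemma trajectory_zero : trajectory A B x u 0 = x := by
  simp [trajectory]

lemma trajectory_succ (j : ℕ) :
    trajectory A B x u (j + 1) = A *ᵥ trajectory A B x u j + B *ᵥ u j := by
  have hpow : ∀ k ∈ Finset.range j, A ^ (j - k) * B = A * (A ^ (j - 1 - k) * B) := fun k hk => by
    rw [← Matrix.mul_assoc, ← pow_succ', show j - 1 - k + 1 = j - k by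
      have := Finset.mem_range.1 hk; omega]
  simp only [trajectory, Finset.sum_range_succ, Nat.add_sub_cancel, Nat.sub_self, pow_zero,
    Matrix.one_mul, Matrix.mulVec_add, Matrix.mulVec_sum, Matrix.mulVec_mulVec, ← pow_succ']
  rw [add_assoc, Finset.sum_congr rfl fun k hk => by rw [hpow k hk]]

end Trajectory

section NullControllability

variable {n m : ℕ} {A : Matrix (Fin n) (Fin n) ℝ} {B : Matrix (Fin n) (Fin m) ℝ}
  {X : Set (Euc n)} {U : Set (Euc m)} {lam : ℝ}

-- block `k` of `v` is the input at time `k`, matching the column block `A ^ (n - 1 - k) * B`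
def ctrbInput (v : Fin n × Fin m → ℝ) (k : ℕ) : Fin m → ℝ :=
  fun i => if h : k < n then v (⟨k, h⟩, i) else 0

lemma trajectory_ctrbInput (x : Fin n → ℝ) (v : Fin n × Fin m → ℝ) :
    trajectory A B x (ctrbInput v) n = A ^ n *ᵥ x + ctrb A B *ᵥ v := by
  rw [trajectory, ← Fin.sum_univ_eq_sum_range (fun k => (A ^ (n - 1 - k) * B) *ᵥ ctrbInput v k)]
  congr 1
  ext i
  simp [Matrix.mulVec, dotProduct, Fintype.sum_prod_type, ctrbInput, ctrb, Finset.sum_apply]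

@[simp]
lemma ctrbInput_zero (k : ℕ) : ctrbInput (0 : Fin n × Fin m → ℝ) k = 0 := by
  ext i
  simp [ctrbInput]

@[fun_prop]
lemma continuous_ctrbInput (k : ℕ) : Continuous fun v : Fin n × Fin m → ℝ => ctrbInput v k := by
  unfold ctrbInput
  split_ifs <;> fun_prop

lemma Controllable.surjective_mulVec (hAB : Controllable A B) :
    Function.Surjective (ctrb A B).mulVecLin := by
  rw [← LinearMap.range_eq_top]
  exact Submodule.eq_top_of_finrank_eq (by rw [Module.finrank_fin_fun]; exact hAB)

lemma exists_closedBall_subset_Qiter (hlam : lam ≠ 0) (hAB : Controllable A B) (hX : X ∈ 𝓝 0)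
    (hU : U ∈ 𝓝 0) :
    ∃ r > 0, ∀ C : Set (Euc n), 0 ∈ C → closedBall 0 r ⊆ Qiter A B X U lam C n := by
  obtain ⟨g, hg⟩ := (ctrb A B).mulVecLin.exists_rightInverse_of_surjective
    (LinearMap.range_eq_top.2 hAB.surjective_mulVec)
  have hgc : Continuous g := g.continuous_of_finiteDimensional
  -- dead-beat input: it steers `x` to the origin in `n` steps, and is continuous and zero at `0`
  let u : Euc n → ℕ → Fin m → ℝ := fun x => ctrbInput (g (-(A ^ n *ᵥ x)))
  let s : Euc n → ℕ → Fin n → ℝ := fun x => trajectory A B x (u x)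
  have hsn : ∀ x, s x n = 0 := fun x => by
    have hgx := LinearMap.congr_fun hg (-(A ^ n *ᵥ x))
    simp only [LinearMap.comp_apply, Matrix.mulVecLin_apply, LinearMap.id_apply] at hgx
    simp only [s, u, trajectory_ctrbInput, hgx, add_neg_cancel]
  have hu : ∀ k, Tendsto (fun x => WithLp.toLp 2 (u x k)) (𝓝 0) (𝓝 0) := fun k => by
    have : Continuous fun x => WithLp.toLp 2 (u x k) := by fun_prop
    simpa [u] using this.tendsto 0
  have hs : ∀ j, Tendsto (fun x => WithLp.toLp 2 (s x j)) (𝓝 0) (𝓝 0) := fun j => by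
    have : Continuous fun x => WithLp.toLp 2 (s x j) := by
      simp only [s, u, trajectory]
      fun_prop
    simpa [s, u, trajectory] using this.tendsto 0
  have hev : ∀ᶠ x in 𝓝 (0 : Euc n), ∀ j ∈ Finset.range n,
      WithLp.toLp 2 (s x j) ∈ lam ^ j • X ∧ WithLp.toLp 2 (u x j) ∈ lam ^ j • U := by
    refine (eventually_all_finset _).2 fun j _ => ((hs j).eventually_mem ?_).and
      ((hu j).eventually_mem ?_)
    exacts [(set_smul_mem_nhds_zero_iff (pow_ne_zero j hlam)).2 hX,
      (set_smul_mem_nhds_zero_iff (pow_ne_zero j hlam)).2 hU]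
  obtain ⟨r, hr, hball⟩ := nhds_basis_closedBall.eventually_iff.1 hev
  refine ⟨r, hr, fun C hC x hx => ?_⟩
  have hx' := hball hx
  simpa [s] using mem_Qiter_of_dynamics hlam (s x) (u x) (trajectory_succ A B x (u x))
    (fun j hj => (hx' j (Finset.mem_range.2 hj)).1) (fun j hj => (hx' j (Finset.mem_range.2 hj)).2)
    (by rw [hsn]; exact ⟨0, hC, smul_zero _⟩)

end NullControllability

lemma log_one_sub_mul_exp_add_le {r : ℝ} (hr0 : 0 ≤ r) (hr1 : r ≤ 1) (t : ℝ) :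
    log ((1 - r) * exp t + r) ≤ t - r * (1 - exp (-t)) := by
  have hpos : 0 < 1 - r + r * exp (-t) := by
    rcases hr1.lt_or_eq with hr1 | rfl
    · nlinarith [exp_pos (-t)]
    · simpa using exp_pos (-t)
  have hsplit : (1 - r) * exp t + r = exp t * (1 - r + r * exp (-t)) := by
    rw [mul_add, mul_left_comm, ← exp_add, add_neg_cancel, exp_zero]
    ring
  rw [hsplit, log_mul (exp_pos t).ne' hpos.ne', log_exp]
  linarith [log_le_sub_one_of_pos hpos]

lemma mul_one_sub_exp_neg_le {t T : ℝ} (ht : 0 ≤ t) (htT : t ≤ T) :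
    t / T * (1 - exp (-T)) ≤ 1 - exp (-t) := by
  rcases ht.eq_or_lt with rfl | ht
  · simp
  have hT : 0 < T := ht.trans_le htT
  have hθ : 0 ≤ 1 - t / T := by rw [sub_nonneg, div_le_one hT]; exact htT
  have := convexOn_exp.2 (mem_univ (-T)) (mem_univ 0) (div_nonneg ht.le hT.le) hθ
    (add_sub_cancel _ _)
  simp only [smul_eq_mul, mul_zero, add_zero, mul_neg, div_mul_cancel₀ t hT.ne', exp_zero,
    mul_one] at this
  linarith

lemma exists_min_log_le_mul {r M : ℝ} (hr0 : 0 < r) (hr1 : r ≤ 1) (hM : 0 ≤ M) :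
    ∃ η ∈ Ico (0 : ℝ) 1, ∀ t, 0 ≤ t → min M (log ((1 - r) * exp t + r)) ≤ η * t := by
  set T := M + 1
  have hT : 0 < T := by positivity
  have hexpT : exp (-T) < 1 := exp_lt_one_iff.2 (by linarith)
  set c := 1 - r * (1 - exp (-T)) / T
  have hc0 : 0 ≤ c := by
    rw [sub_nonneg, div_le_one hT]
    nlinarith [exp_pos (-T)]
  have hc1 : c < 1 := sub_lt_self _ (div_pos (mul_pos hr0 (by linarith)) hT)
  have hMT : M / T < 1 := (div_lt_one hT).2 (by linarith)
  -- slope `c` below `T` (the chord of `exp`), slope `M / T` beyond it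
  refine ⟨max c (M / T), ⟨hc0.trans (le_max_left _ _), max_lt hc1 hMT⟩, fun t ht => ?_⟩
  rcases le_or_gt t T with htT | htT
  · calc min M (log ((1 - r) * exp t + r)) ≤ t - r * (1 - exp (-t)) :=
          (min_le_right _ _).trans (log_one_sub_mul_exp_add_le hr0.le hr1 t)
      _ ≤ c * t := by
          have := mul_le_mul_of_nonneg_left (mul_one_sub_exp_neg_le ht htT) hr0.le
          have hct : c * t = t - r * (t / T * (1 - exp (-T))) := by simp only [c]; field_simp
          linarith
      _ ≤ max c (M / T) * t := mul_le_mul_of_nonneg_right (le_max_left _ _) ht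
  · calc min M (log ((1 - r) * exp t + r)) ≤ M / T * T := by
          rw [div_mul_cancel₀ _ hT.ne']; exact min_le_left _ _
      _ ≤ max c (M / T) * t := mul_le_mul (le_max_right _ _) htT.le hT.le
          ((div_nonneg hM hT.le).trans (le_max_right _ _))

section Contraction

variable {n m : ℕ} {A : Matrix (Fin n) (Fin n) ℝ} {B : Matrix (Fin n) (Fin m) ℝ}
  {X : Set (Euc n)} {U : Set (Euc m)} {lam : ℝ} {ξ : Euc n}

lemma rho_le_of_smul_add_smul_subset {K L Z : Set (Euc n)} {r R α : ℝ}
    (hK : K ⊆ closedBall 0 R) (hr : 0 < r) (hrK : closedBall 0 r ⊆ K) (hrZ : closedBall 0 r ⊆ Z)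
    (hα : 1 ≤ α) (h : α⁻¹ • L + (1 - α⁻¹) • Z ⊆ K) (hξ : ‖ξ‖ = 1) :
    rho ξ L ≤ α * rho ξ K - (α - 1) * r := by
  have hα0 : 0 < α := one_pos.trans_le hα
  have hrρ := le_rho_of_closedBall_subset hr hrK hK hξ
  refine Real.sSup_le (fun μ ⟨hμ, hμL⟩ => ?_) (by nlinarith)
  have hrξ : r • ξ ∈ Z := hrZ (by simp [norm_smul, hξ, abs_of_pos hr])
  have hmem := h (add_mem_add (smul_mem_smul_set hμL) (smul_mem_smul_set hrξ))
  rw [smul_smul, smul_smul, ← add_smul] at hmem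
  have hcoef : 0 < α⁻¹ * μ + (1 - α⁻¹) * r :=
    add_pos_of_pos_of_nonneg (by positivity)
      (mul_nonneg (sub_nonneg.2 (inv_le_one_of_one_le₀ hα)) hr.le)
  have hle := le_rho hK hξ hcoef hmem
  have : α * (α⁻¹ * μ + (1 - α⁻¹) * r) = μ + (α - 1) * r := by field_simp
  nlinarith

lemma rho_Qiter_le (hXc : Convex ℝ X) (hUc : Convex ℝ U) {r R : ℝ} (hXR : X ⊆ closedBall 0 R)
    (hr : 0 < r) {k : ℕ} (hk : k ≠ 0)
    (hball : ∀ C : Set (Euc n), 0 ∈ C → closedBall 0 r ⊆ Qiter A B X U lam C k)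
    {C D : Set (Euc n)} (hC : IsCSet C) (hD : IsCSet D) (hξ : ‖ξ‖ = 1) :
    rho ξ (Qiter A B X U lam D k) ≤
      exp (cdist C D) * rho ξ (Qiter A B X U lam C k) - (exp (cdist C D) - 1) * r := by
  set α := exp (cdist C D)
  have hα : 1 ≤ α := one_le_exp (cdist_nonneg C D)
  have hQR : ∀ E, Qiter A B X U lam E k ⊆ closedBall 0 R := fun E => (Qiter_subset hk).trans hXR
  have hsub : α⁻¹ • Qiter A B X U lam (α • C) k + (1 - α⁻¹) • Qiter A B X U lam {0} k
      ⊆ Qiter A B X U lam C k := by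
    have := smul_add_smul_Qiter_subset (A := A) (B := B) (lam := lam) hXc hUc
      (inv_nonneg.2 (zero_le_one.trans hα)) (sub_nonneg.2 (inv_le_one_of_one_le₀ hα))
      (add_sub_cancel _ _) (α • C) {0} k
    rwa [smul_smul, inv_mul_cancel₀ (one_pos.trans_le hα).ne', one_smul, smul_set_singleton,
      smul_zero, singleton_zero, add_zero] at this
  calc rho ξ (Qiter A B X U lam D k) ≤ rho ξ (Qiter A B X U lam (α • C) k) :=
        rho_mono (hQR _) (Qiter_mono (subset_exp_cdist_smul hC hD) k) hξ
    _ ≤ α * rho ξ (Qiter A B X U lam C k) - (α - 1) * r :=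
        rho_le_of_smul_add_smul_subset (hQR C) hr (hball C (interior_subset hC.2.2))
          (hball {0} rfl) hα hsub hξ

lemma abs_log_rho_Qiter_sub_le (hXc : Convex ℝ X) (hUc : Convex ℝ U) {r R : ℝ}
    (hXR : X ⊆ closedBall 0 R) (hr : 0 < r) (hrR : r ≤ R) {k : ℕ} (hk : k ≠ 0)
    (hball : ∀ C : Set (Euc n), 0 ∈ C → closedBall 0 r ⊆ Qiter A B X U lam C k)
    {C D : Set (Euc n)} (hC : IsCSet C) (hD : IsCSet D) (hCD : C ⊆ D) (hξ : ‖ξ‖ = 1) :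
    |log (rho ξ (Qiter A B X U lam C k)) - log (rho ξ (Qiter A B X U lam D k))| ≤
      min (log R - log r) (log ((1 - r / R) * exp (cdist C D) + r / R)) := by
  set ρ₁ := rho ξ (Qiter A B X U lam C k)
  set ρ₂ := rho ξ (Qiter A B X U lam D k)
  have hR : 0 < R := hr.trans_le hrR
  have hQR : ∀ E, Qiter A B X U lam E k ⊆ closedBall 0 R := fun E => (Qiter_subset hk).trans hXR
  have hrρ₁ : r ≤ ρ₁ :=
    le_rho_of_closedBall_subset hr (hball C (interior_subset hC.2.2)) (hQR C) hξ
  have hρ₁ : 0 < ρ₁ := hr.trans_le hrρ₁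
  have hρ₁R : ρ₁ ≤ R := rho_le (hQR C) hR.le hξ
  have hρ₁₂ : ρ₁ ≤ ρ₂ := rho_mono (hQR D) (Qiter_mono hCD k) hξ
  have hρ₂R : ρ₂ ≤ R := rho_le (hQR D) hR.le hξ
  have hα : 1 ≤ exp (cdist C D) := one_le_exp (cdist_nonneg C D)
  have hρ₂ : ρ₂ / ρ₁ ≤ (1 - r / R) * exp (cdist C D) + r / R := by
    rw [div_le_iff₀ hρ₁]
    refine (rho_Qiter_le hXc hUc hXR hr hk hball hC hD hξ).trans ?_
    have : r / R * ρ₁ ≤ r := by rw [div_mul_eq_mul_div, div_le_iff₀ hR]; nlinarith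
    nlinarith
  rw [abs_sub_comm, abs_of_nonneg (sub_nonneg.2 (log_le_log hρ₁ hρ₁₂))]
  refine le_min (by linarith [log_le_log (hρ₁.trans_le hρ₁₂) hρ₂R, log_le_log hr hrρ₁]) ?_
  rw [← log_div (hρ₁.trans_le hρ₁₂).ne' hρ₁.ne']
  exact log_le_log (div_pos (hρ₁.trans_le hρ₁₂) hρ₁) hρ₂

end Contraction

theorem stmt6 {n m : ℕ} (lam : ℝ) (hlam : lam ∈ Set.Ioc (0 : ℝ) 1)
    (A : Matrix (Fin n) (Fin n) ℝ) (B : Matrix (Fin n) (Fin m) ℝ)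
    (hAB : Controllable A B)
    (X : Set (Euc n)) (U : Set (Euc m)) (hX : IsCSet X) (hU : IsCSet U) :
    ∃ η ∈ Set.Ico (0 : ℝ) 1, ∀ C D : Set (Euc n), IsCSet C → IsCSet D → C ⊆ D →
      cdist (Qiter A B X U lam C n) (Qiter A B X U lam D n) ≤ η * cdist C D := by
  rcases eq_or_ne n 0 with rfl | hn
  · exact ⟨0, ⟨le_rfl, one_pos⟩, fun C D _ _ _ => by simp [cdist_eq_zero_of_dim_zero]⟩
  obtain ⟨r, hr, hball⟩ := exists_closedBall_subset_Qiter hlam.1.ne' hAB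
    (mem_interior_iff_mem_nhds.1 hX.2.2) (mem_interior_iff_mem_nhds.1 hU.2.2)
  obtain ⟨R₀, hXR₀⟩ := hX.2.1.isBounded.subset_closedBall 0
  set R := max R₀ r
  have hXR : X ⊆ closedBall 0 R := hXR₀.trans (closedBall_subset_closedBall (le_max_left _ _))
  have hrR : r ≤ R := le_max_right _ _
  obtain ⟨η, hη, hηle⟩ := exists_min_log_le_mul (div_pos hr (hr.trans_le hrR))
    ((div_le_one (hr.trans_le hrR)).2 hrR) (sub_nonneg.2 (log_le_log hr hrR))
  refine ⟨η, hη, fun C D hC hD hCD =>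
    Real.iSup_le (fun ξ => ?_) (mul_nonneg hη.1 (cdist_nonneg C D))⟩
  exact (abs_log_rho_Qiter_sub_le hX.1 hU.1 hXR hr hrR hn hball hC hD hCD
    (mem_sphere_zero_iff_norm.1 ξ.2)).trans (hηle _ (cdist_nonneg C D))
end

section
/- Let λ ∈ (0,1], let X ⊆ ℝⁿ and U ⊆ ℝᵐ be C-sets, and let C ⊆ X be a λ-contractive set. Then for every k ∈ ℕ the set Q_k^λ(C) is λ-contractive, and consequently Q_k^λ(C) ⊆ C_max^λ. -/
open Set Metric Pointwise

section

variable {n m : ℕ} {A : Matrix (Fin n) (Fin n) ℝ} {B : Matrix (Fin n) (Fin m) ℝ}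
  {X : Set (Euc n)} {U : Set (Euc m)} {lam : ℝ} {D : Set (Euc n)}

lemma Q1_mono {D' : Set (Euc n)} (h : D ⊆ D') : Q1 A B X U lam D ⊆ Q1 A B X U lam D' :=
  fun _ ⟨hxX, u, hu, hmem⟩ => ⟨hxX, u, hu, smul_set_mono h hmem⟩

lemma IsContractive.subset_Q1 (hD : IsContractive A B X U lam D) : D ⊆ Q1 A B X U lam D :=
  fun x hx => ⟨hD.1 hx, hD.2 x hx⟩

/-- Since `D ⊆ Q₁(D)`, a successor of a point of `Q₁(D)` in `λ • D` also lies in `λ • Q₁(D)`. -/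
lemma IsContractive.Q1 (hD : IsContractive A B X U lam D) :
    IsContractive A B X U lam (Q1 A B X U lam D) :=
  ⟨fun _ hx => hx.1, fun _ hx => (Q1_mono hD.subset_Q1 hx).2⟩

lemma IsContractive.Qiter (hD : IsContractive A B X U lam D) (k : ℕ) :
    IsContractive A B X U lam (Qiter A B X U lam D k) := by
  induction k with
  | zero => exact hD
  | succ k ih => exact ih.Q1

lemma IsContractive.subset_Cmax (hD : IsContractive A B X U lam D) : D ⊆ Cmax A B X U lam :=
  subset_sUnion_of_mem hD

end

theorem stmt11_general {n m : ℕ} (lam : ℝ)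
    (A : Matrix (Fin n) (Fin n) ℝ) (B : Matrix (Fin n) (Fin m) ℝ)
    (X : Set (Euc n)) (U : Set (Euc m))
    (C : Set (Euc n)) (hC : IsContractive A B X U lam C) :
    ∀ k : ℕ, IsContractive A B X U lam (Qiter A B X U lam C k) ∧
      Qiter A B X U lam C k ⊆ Cmax A B X U lam :=
  fun k => ⟨hC.Qiter k, (hC.Qiter k).subset_Cmax⟩

theorem stmt11 {n m : ℕ} (lam : ℝ) (hlam : lam ∈ Set.Ioc (0 : ℝ) 1)
    (A : Matrix (Fin n) (Fin n) ℝ) (B : Matrix (Fin n) (Fin m) ℝ)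
    (X : Set (Euc n)) (U : Set (Euc m)) (hX : IsCSet X) (hU : IsCSet U)
    (C : Set (Euc n)) (hC : IsContractive A B X U lam C) :
    ∀ k : ℕ, IsContractive A B X U lam (Qiter A B X U lam C k) ∧
      Qiter A B X U lam C k ⊆ Cmax A B X U lam :=
  stmt11_general lam A B X U C hC
end

section
/- Fix n ≥ 1 and consider the system with A = 1.1·I_n, B = I_n, X = [−10,10]ⁿ, U = [−1,1]ⁿ. For every λ ∈ [0.6, 1], the set C = [−2,2]ⁿ is λ-contractive, and the maximal λ-contractive set is C_max^λ = [−c, c]ⁿ with c = 1/(1.1 − λ). -/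
open Set Metric Pointwise

/-- The hypercube `[-a, a]ⁿ`. -/
def cube {n : ℕ} (a : ℝ) : Set (Euc n) := {x : Euc n | ∀ i, |x i| ≤ a}

/-
For `x⁺ = α x + u` with `|uᵢ| ≤ b` the coordinates decouple. Saturating each input against `α xᵢ`
shows that `[-a, a]ⁿ` is `λ`-contractive as soon as `|α| a - b ≤ λ a`. Conversely, if `M` is the
largest coordinate modulus on a `λ`-contractive set, then `|α| M ≤ λ M + b`, i.e.
`M ≤ b / (|α| - λ)`; the cube of exactly that half-width attains the bound.
-/

lemma abs_add_max_min_neg_le {t b c : ℝ} (hc : 0 ≤ c) (h : |t| - b ≤ c) :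
    |t + max (-b) (min b (-t))| ≤ c := by
  rw [abs_le]
  constructor <;> cases abs_cases t <;> cases max_cases (-b) (min b (-t)) <;>
    cases min_cases b (-t) <;> linarith

lemma toLp_smul_one_mulVec_add_one_mulVec_apply {n : ℕ} (α : ℝ) (x u : Euc n) (i : Fin n) :
    (WithLp.toLp 2 ((α • (1 : Matrix (Fin n) (Fin n) ℝ)).mulVec x +
      (1 : Matrix (Fin n) (Fin n) ℝ).mulVec u) : Euc n) i = α * x i + u i := by
  simp [Matrix.smul_mulVec, Matrix.one_mulVec]

section ScalarSystem

variable {n : ℕ} {α r b lam : ℝ}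

lemma isContractive_cube {a : ℝ} (hlam : 0 < lam) (hb : 0 ≤ b) (ha₀ : 0 ≤ a) (har : a ≤ r)
    (h : |α| * a - b ≤ lam * a) :
    IsContractive (α • (1 : Matrix (Fin n) (Fin n) ℝ)) (1 : Matrix (Fin n) (Fin n) ℝ)
      (cube r) (cube b) lam (cube a) := by
  refine ⟨fun x hx i => (hx i).trans har, fun x hx => ?_⟩
  refine ⟨WithLp.toLp 2 fun i => max (-b) (min b (-(α * x i))), fun i => ?_, ?_⟩
  · exact abs_le.2 ⟨le_max_left _ _, max_le (by linarith) (min_le_left _ _)⟩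
  · rw [Set.mem_smul_set_iff_inv_smul_mem₀ hlam.ne']
    intro i
    rw [PiLp.smul_apply, toLp_smul_one_mulVec_add_one_mulVec_apply, smul_eq_mul, abs_mul,
      abs_inv, abs_of_pos hlam, inv_mul_le_iff₀ hlam]
    refine abs_add_max_min_neg_le (by positivity) ?_
    have hxi : |x i| ≤ a := hx i
    rw [abs_mul]
    nlinarith [abs_nonneg α]

lemma mul_abs_apply_le_of_isContractive {C : Set (Euc n)} {M : ℝ} (hlam : 0 ≤ lam)
    (hC : IsContractive (α • (1 : Matrix (Fin n) (Fin n) ℝ)) (1 : Matrix (Fin n) (Fin n) ℝ)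
      (cube r) (cube b) lam C)
    (hM : C ⊆ cube M) {y : Euc n} (hy : y ∈ C) (j : Fin n) :
    |α| * |y j| ≤ lam * M + b := by
  obtain ⟨u, hu, c, hc, hyc⟩ := hC.2 y hy
  have hj : lam * c j = α * y j + u j := by
    rw [← toLp_smul_one_mulVec_add_one_mulVec_apply, ← hyc]
    rfl
  calc |α| * |y j| = |lam * c j - u j| := by rw [← abs_mul]; congr 1; linarith
    _ ≤ |lam * c j| + |u j| := abs_sub _ _
    _ ≤ lam * M + b := by
      rw [abs_mul, abs_of_nonneg hlam]
      gcongr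
      exacts [hM hc j, hu j]

lemma subset_cube_of_isContractive {C : Set (Euc n)} (hlam : 0 ≤ lam) (hα : lam < |α|)
    (hC : IsContractive (α • (1 : Matrix (Fin n) (Fin n) ℝ)) (1 : Matrix (Fin n) (Fin n) ℝ)
      (cube r) (cube b) lam C) :
    C ⊆ cube (b / (|α| - lam)) := by
  intro x hx i
  set S : Set ℝ := {s | ∃ y ∈ C, ∃ j, |y j| = s}
  have hS : BddAbove S := ⟨r, by rintro s ⟨y, hy, j, rfl⟩; exact hC.1 hy j⟩
  have hCM : C ⊆ cube (sSup S) := fun y hy j => le_csSup hS ⟨y, hy, j, rfl⟩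
  have hM : |α| * sSup S ≤ lam * sSup S + b := by
    rw [← le_div_iff₀' (hlam.trans_lt hα)]
    refine csSup_le ⟨|x i|, x, hx, i, rfl⟩ ?_
    rintro s ⟨y, hy, j, rfl⟩
    rw [le_div_iff₀' (hlam.trans_lt hα)]
    exact mul_abs_apply_le_of_isContractive hlam hC hCM hy j
  calc |x i| ≤ sSup S := hCM hx i
    _ ≤ b / (|α| - lam) := by rw [le_div_iff₀ (sub_pos.2 hα)]; linarith

lemma cmax_eq_cube (hlam : 0 < lam) (hα : lam < |α|) (hb : 0 ≤ b) (hr : b / (|α| - lam) ≤ r) :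
    Cmax (α • (1 : Matrix (Fin n) (Fin n) ℝ)) (1 : Matrix (Fin n) (Fin n) ℝ)
      (cube r) (cube b) lam = cube (b / (|α| - lam)) := by
  have hd : 0 < |α| - lam := sub_pos.2 hα
  refine (sUnion_subset fun C hC => subset_cube_of_isContractive hlam.le hα hC).antisymm
    (subset_sUnion_of_mem (isContractive_cube hlam hb (div_nonneg hb hd.le) hr ?_))
  rw [div_eq_mul_inv]
  field_simp
  linarith

end ScalarSystem

theorem stmt17_general {n : ℕ} (lam : ℝ) (hlam : lam ∈ Set.Icc (0.6 : ℝ) 1) :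
    IsContractive ((1.1 : ℝ) • (1 : Matrix (Fin n) (Fin n) ℝ))
        (1 : Matrix (Fin n) (Fin n) ℝ) (cube 10) (cube 1) lam (cube 2) ∧
      Cmax ((1.1 : ℝ) • (1 : Matrix (Fin n) (Fin n) ℝ)) (1 : Matrix (Fin n) (Fin n) ℝ)
          (cube 10) (cube 1) lam
        = cube (1 / (1.1 - lam)) := by
  obtain ⟨hlam₁, hlam₂⟩ := hlam
  have hα : |(1.1 : ℝ)| = 1.1 := abs_of_pos (by norm_num)
  have hlam₀ : 0 < lam := by linarith
  refine ⟨isContractive_cube hlam₀ zero_le_one (by norm_num) (by norm_num)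
    (by rw [hα]; linarith), ?_⟩
  have hr : 1 / (|(1.1 : ℝ)| - lam) ≤ 10 := by
    rw [hα, div_le_iff₀ (by linarith)]
    linarith
  rw [cmax_eq_cube hlam₀ (by rw [hα]; linarith) zero_le_one hr, hα]

theorem stmt17 {n : ℕ} (hn : 1 ≤ n) (lam : ℝ) (hlam : lam ∈ Set.Icc (0.6 : ℝ) 1) :
    IsContractive ((1.1 : ℝ) • (1 : Matrix (Fin n) (Fin n) ℝ))
        (1 : Matrix (Fin n) (Fin n) ℝ) (cube 10) (cube 1) lam (cube 2) ∧
      Cmax ((1.1 : ℝ) • (1 : Matrix (Fin n) (Fin n) ℝ)) (1 : Matrix (Fin n) (Fin n) ℝ)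
          (cube 10) (cube 1) lam
        = cube (1 / (1.1 - lam)) :=
  stmt17_general lam hlam
end

section
/- Fix n ≥ 1 and consider the system with A = 1.1·I_n, B = I_n, X = [−10,10]ⁿ, U = [−1,1]ⁿ, and let C = [−2,2]ⁿ. For every k ∈ ℕ and every λ ∈ [0.6, 1], Q_k^λ(C) = [−c_k^λ, c_k^λ]ⁿ with c_k^λ = 2·(λ/1.1)^k + (1 − (λ/1.1)^k)/(1.1 − λ), and Q_k^λ(X) = [−x_k^λ, x_k^λ]ⁿ with x_k^λ = 10·(λ/1.1)^k + (1 − (λ/1.1)^k)/(1.1 − λ). -/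
open Set Metric Pointwise

/-!
Since `A = α • 1` and `B = 1` act coordinatewise, one step maps a cube to a cube: a coordinate
`x i` can be steered into `[-λc, λc]` by some `|u i| ≤ s` iff `|α * x i| ≤ λc + s`. So
`Q₁^λ([-c, c]ⁿ) = [-c', c']ⁿ` with `c' = (λc + s) / α`, provided `c' ≤ r` so that the state
constraint `[-r, r]ⁿ` does not cut. The affine map `c ↦ (λc + s) / α` keeps `[0, r]` invariant
when `λr + s ≤ αr`, and its iterates have the stated closed form.
-/

theorem exists_abs_le_and_abs_add_le_iff {b s : ℝ} (hb : 0 ≤ b) (hs : 0 ≤ s) (c : ℝ) :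
    (∃ u, |u| ≤ s ∧ |c + u| ≤ b) ↔ |c| ≤ b + s := by
  have h := Set.ext_iff.mp (closedBall_sub_closedBall hb hs (0 : ℝ) 0) c
  simp only [Set.mem_sub, mem_closedBall, Real.dist_eq, sub_zero] at h
  rw [← h]
  constructor
  · rintro ⟨u, hu, hcu⟩
    exact ⟨c + u, hcu, u, hu, add_sub_cancel_right c u⟩
  · rintro ⟨y, hy, u, hu, rfl⟩
    exact ⟨u, hu, by rwa [sub_add_cancel]⟩

theorem smul_cube {n : ℕ} {lam : ℝ} (hlam : 0 < lam) (a : ℝ) :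
    lam • (cube a : Set (Euc n)) = cube (lam * a) := by
  ext x
  simp only [Set.mem_smul_set_iff_inv_smul_mem₀ hlam.ne', cube, Set.mem_ofPred_eq,
    PiLp.smul_apply, smul_eq_mul, abs_mul, abs_inv, abs_of_pos hlam, inv_mul_le_iff₀ hlam]

theorem Q1_smul_one_cube {n : ℕ} {α lam r s a : ℝ} (hα : 0 < α) (hlam : 0 < lam)
    (hs : 0 ≤ s) (ha : 0 ≤ a) (hr : (lam * a + s) / α ≤ r) :
    Q1 (α • (1 : Matrix (Fin n) (Fin n) ℝ)) (1 : Matrix (Fin n) (Fin n) ℝ)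
        (cube r) (cube s) lam (cube a)
      = cube ((lam * a + s) / α) := by
  have hcoord (c : ℝ) : (∃ u, |u| ≤ s ∧ |α * c + u| ≤ lam * a) ↔ |c| ≤ (lam * a + s) / α := by
    rw [exists_abs_le_and_abs_add_le_iff (by positivity) hs, abs_mul, abs_of_pos hα,
      le_div_iff₀' hα]
  ext x
  simp only [Q1, smul_cube hlam, Matrix.smul_mulVec, Matrix.one_mulVec]
  simp only [cube, Set.mem_ofPred_eq]
  constructor
  · rintro ⟨-, u, hu, hxu⟩ i
    exact (hcoord (x i)).mp ⟨u i, hu i, by simpa using hxu i⟩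
  · intro hx
    choose u hu hxu using fun i => (hcoord (x i)).mpr (hx i)
    exact ⟨fun i => (hx i).trans hr, WithLp.toLp 2 u, hu, fun i => by simpa using hxu i⟩

theorem Qiter_smul_one_cube {n : ℕ} {α lam r s a : ℝ} (hα : 0 < α) (hlam : 0 < lam)
    (hs : 0 ≤ s) (ha : 0 ≤ a) (har : a ≤ r) (hr : lam * r + s ≤ α * r) (k : ℕ) :
    Qiter (α • (1 : Matrix (Fin n) (Fin n) ℝ)) (1 : Matrix (Fin n) (Fin n) ℝ)
        (cube r) (cube s) lam (cube a) k
      = cube ((fun c => (lam * c + s) / α)^[k] a) := by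
  have hmaps : Set.MapsTo (fun c => (lam * c + s) / α) (Set.Icc 0 r) (Set.Icc 0 r) := by
    rintro c ⟨hc0, hcr⟩
    refine ⟨by positivity, (div_le_iff₀' hα).mpr ?_⟩
    nlinarith
  induction k with
  | zero => rfl
  | succ k ih =>
    have hck := hmaps.iterate k ⟨ha, har⟩
    rw [Function.iterate_succ_apply']
    exact (congrArg _ ih).trans <| Q1_smul_one_cube hα hlam hs hck.1 (hmaps hck).2

theorem iterate_affine_eq {α lam s : ℝ} (hα : α ≠ 0) (hlam : lam ≠ α) (a : ℝ) (k : ℕ) :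
    (fun c => (lam * c + s) / α)^[k] a
      = a * (lam / α) ^ k + s * (1 - (lam / α) ^ k) / (α - lam) := by
  have hαlam : α - lam ≠ 0 := sub_ne_zero.mpr hlam.symm
  induction k with
  | zero => simp
  | succ k ih =>
    rw [Function.iterate_succ_apply', ih, pow_succ]
    field_simp
    ring

theorem stmt18_general {n : ℕ} (k : ℕ) (lam : ℝ)
    (hlam : lam ∈ Set.Icc (0.6 : ℝ) 1) :
    Qiter ((1.1 : ℝ) • (1 : Matrix (Fin n) (Fin n) ℝ)) (1 : Matrix (Fin n) (Fin n) ℝ)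
        (cube 10) (cube 1) lam (cube 2) k
      = cube (2 * (lam / 1.1) ^ k + (1 - (lam / 1.1) ^ k) / (1.1 - lam)) ∧
    Qiter ((1.1 : ℝ) • (1 : Matrix (Fin n) (Fin n) ℝ)) (1 : Matrix (Fin n) (Fin n) ℝ)
        (cube 10) (cube 1) lam (cube 10) k
      = cube (10 * (lam / 1.1) ^ k + (1 - (lam / 1.1) ^ k) / (1.1 - lam)) := by
  obtain ⟨hlam₀, hlam₁⟩ := hlam
  have hQ (a : ℝ) (ha : 0 ≤ a) (ha₁₀ : a ≤ 10) :
      Qiter ((1.1 : ℝ) • (1 : Matrix (Fin n) (Fin n) ℝ)) (1 : Matrix (Fin n) (Fin n) ℝ)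
          (cube 10) (cube 1) lam (cube a) k
        = cube (a * (lam / 1.1) ^ k + (1 - (lam / 1.1) ^ k) / (1.1 - lam)) := by
    rw [Qiter_smul_one_cube (by norm_num) (by linarith) zero_le_one ha ha₁₀ (by linarith),
      iterate_affine_eq (by norm_num) (by linarith), one_mul]
  exact ⟨hQ 2 (by norm_num) (by norm_num), hQ 10 (by norm_num) le_rfl⟩

theorem stmt18 {n : ℕ} (hn : 1 ≤ n) (k : ℕ) (lam : ℝ)
    (hlam : lam ∈ Set.Icc (0.6 : ℝ) 1) :
    Qiter ((1.1 : ℝ) • (1 : Matrix (Fin n) (Fin n) ℝ)) (1 : Matrix (Fin n) (Fin n) ℝ)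
        (cube 10) (cube 1) lam (cube 2) k
      = cube (2 * (lam / 1.1) ^ k + (1 - (lam / 1.1) ^ k) / (1.1 - lam)) ∧
    Qiter ((1.1 : ℝ) • (1 : Matrix (Fin n) (Fin n) ℝ)) (1 : Matrix (Fin n) (Fin n) ℝ)
        (cube 10) (cube 1) lam (cube 10) k
      = cube (10 * (lam / 1.1) ^ k + (1 - (lam / 1.1) ^ k) / (1.1 - lam)) :=
  stmt18_general k lam hlam
end
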